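/- Let N ≥ 1 be an integer, t > 0, and let x_1, …, x_N ∈ ℤ. For integers M ≥ 2 define the N × N real matrix A_M by A_M(i, j) = (1 − 1/M)^{⌊Mt⌋} · (M−1)^{−(x_i − i)} · V_M(i, j), where V_M(i, j) = ∑_{l=0}^{i−j} (−1)^l binom(i−j, l) · b(⌊Mt⌋, x_i − i + l) · (M−1)^{−l} if j ≤ i, and V_M(i, j) = ∑_{l=0}^{∞} binom(l + j − i − 1, j − i − 1) · b(⌊Mt⌋, x_i − i + l) · (M−1)^{−l} if j > i; here b(K, m) = binom(K, m) if 0 ≤ m ≤ K and 0 otherwise (so all sums are finite). Define the N × N real matrix G by G(i, j) = e^{−t} ∑_{l=0}^{i−j} (−1)^l binom(i−j, l) · τ_t(x_i − i + l) if j ≤ i, and G(i, j) = e^{−t} ∑_{l=0}^{∞} binom(l + j − i − 1, j − i − 1) · τ_t(x_i − i + l) if j > i, where τ_t(m) = t^m/m! for m ≥ 0 and τ_t(m) = 0 for m < 0 (the infinite series converge). Then lim_{M→∞} det(A_M) = det(G). -/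

import Mathlib

/-!
With `K = ⌊Mt⌋`, each entry of `A_M` is the prefactor `(1 - 1/M)^K`, which tends to `e^{-t}`,
times a sum of terms `c_l · b(K, m₀ + l) (M - 1)^{-(m₀ + l)}`. Since `K / (M - 1) → t`, each
such term tends to the Poisson weight `τ_t(m₀ + l)`, and for large `M` it is bounded by
`τ_{t+1}(m₀ + l)` uniformly in `l`. The coefficients `c_l` grow at most like `2^l`, so
Tannery's theorem passes the limit through the infinite sums. Hence every entry converges,
and so does the determinant.
-/

open Filter Topology

/-- `b(K, m) = binom(K, m)` if `0 ≤ m ≤ K`, else `0` (for `K : ℕ`, `m : ℤ`). -/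
noncomputable def binomExt (K : ℕ) (m : ℤ) : ℝ :=
  if 0 ≤ m ∧ m ≤ K then (K.choose m.toNat : ℝ) else 0

/-- `τ_t(m) = t^m / m!` for `m ≥ 0` and `0` for `m < 0`. -/
noncomputable def poissonWeight (t : ℝ) (m : ℤ) : ℝ :=
  if 0 ≤ m then t ^ m.toNat / (m.toNat.factorial : ℝ) else 0

open scoped Nat

section PoissonWeight

lemma poissonWeight_natCast (t : ℝ) (n : ℕ) : poissonWeight t n = t ^ n / n ! := by
  simp [poissonWeight]

lemma poissonWeight_of_neg (t : ℝ) {m : ℤ} (hm : m < 0) : poissonWeight t m = 0 :=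
  if_neg hm.not_ge

lemma poissonWeight_le_poissonWeight {s t : ℝ} (hs : 0 ≤ s) (hst : s ≤ t) (m : ℤ) :
    poissonWeight s m ≤ poissonWeight t m := by
  unfold poissonWeight
  split_ifs
  · gcongr
  · rfl

lemma zpow_mul_poissonWeight (a t : ℝ) (m : ℤ) :
    a ^ m * poissonWeight t m = poissonWeight (a * t) m := by
  rcases lt_or_ge m 0 with hm | hm
  · simp [poissonWeight_of_neg _ hm]
  · lift m to ℕ using hm
    simp only [poissonWeight_natCast, zpow_natCast, mul_pow, mul_div_assoc]

lemma summable_poissonWeight (t : ℝ) : Summable (poissonWeight t) := by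
  refine .of_nat_of_neg ?_ ?_
  · simpa only [poissonWeight_natCast] using Real.summable_pow_div_factorial t
  · refine summable_of_ne_finset_zero (s := {0}) fun n hn => poissonWeight_of_neg t ?_
    simp only [Finset.mem_singleton] at hn
    omega

lemma summable_poissonWeight_add (t : ℝ) (m₀ : ℤ) :
    Summable fun l : ℕ => poissonWeight t (m₀ + l) :=
  (summable_poissonWeight t).comp_injective fun a b h => by simpa using h

lemma tendsto_tsum_mul_of_norm_le_poissonWeight {T : ℕ → ℤ → ℝ} {g : ℤ → ℝ} {c : ℕ → ℝ}
    {s C : ℝ} (m₀ : ℤ) (hT : ∀ m, Tendsto (fun M => T M m) atTop (𝓝 (g m)))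
    (hTle : ∀ᶠ M in atTop, ∀ m, ‖T M m‖ ≤ poissonWeight s m) (hc : ∀ l, ‖c l‖ ≤ C * 2 ^ l) :
    Tendsto (fun M => ∑' l : ℕ, c l * T M (m₀ + l)) atTop
      (𝓝 (∑' l : ℕ, c l * g (m₀ + l))) := by
  have hsum : Summable fun l : ℕ => C * 2 ^ l * poissonWeight s (m₀ + l) := by
    refine ((summable_poissonWeight_add (2 * s) m₀).mul_left (C * 2 ^ (-m₀))).congr
      fun l => ?_
    -- `2 ^ l * τ_s(m₀ + l) = 2 ^ (-m₀) * τ_{2s}(m₀ + l)`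
    rw [← zpow_mul_poissonWeight, ← zpow_natCast, mul_assoc C, mul_assoc C,
      ← mul_assoc _ (2 ^ (m₀ + l)), ← zpow_add₀ two_ne_zero, neg_add_cancel_left]
  refine tendsto_tsum_of_dominated_convergence hsum (fun l => (hT _).const_mul _) ?_
  filter_upwards [hTle] with M hM l
  rw [norm_mul]
  exact mul_le_mul (hc l) (hM _) (norm_nonneg _) ((norm_nonneg _).trans (hc l))

end PoissonWeight

section BinomExt

lemma binomExt_natCast (K n : ℕ) : binomExt K n = K.choose n := by
  unfold binomExt
  split_ifs with h
  · simp
  · rw [Nat.choose_eq_zero_of_lt (by omega), Nat.cast_zero]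

lemma binomExt_of_neg (K : ℕ) {m : ℤ} (hm : m < 0) : binomExt K m = 0 :=
  if_neg fun h => hm.not_ge h.1

lemma binomExt_nonneg (K : ℕ) (m : ℤ) : 0 ≤ binomExt K m := by
  unfold binomExt
  split_ifs <;> positivity

lemma binomExt_mul_zpow_neg_le (K : ℕ) {q : ℝ} (hq : 0 < q) (m : ℤ) :
    binomExt K m * q ^ (-m) ≤ poissonWeight (K / q) m := by
  rcases lt_or_ge m 0 with hm | hm
  · simp [binomExt_of_neg _ hm, poissonWeight_of_neg _ hm]
  · lift m to ℕ using hm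
    rw [binomExt_natCast, poissonWeight_natCast, zpow_neg, zpow_natCast, div_pow, div_right_comm,
      div_eq_mul_inv _ (q ^ m)]
    gcongr
    exact Nat.choose_le_pow_div m K

lemma norm_choose_add_sub_one_le (d l : ℕ) :
    ‖((l + d - 1).choose (d - 1) : ℝ)‖ ≤ 2 ^ d * 2 ^ l := by
  rw [Real.norm_natCast, ← pow_add]
  exact_mod_cast (Nat.choose_le_two_pow _ _).trans (Nat.pow_le_pow_right two_pos (by omega))

end BinomExt

lemma natCast_sub_one_pos {M : ℕ} (hM : 2 ≤ M) : (0 : ℝ) < M - 1 := by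
  have : (2 : ℝ) ≤ M := by exact_mod_cast hM
  linarith

lemma zpow_neg_mul_mul_mul_zpow_neg {q : ℝ} (hq : q ≠ 0) (a b : ℝ) (m₀ : ℤ) (l : ℕ) :
    q ^ (-m₀) * (a * b * q ^ (-(l : ℤ))) = a * (b * q ^ (-(m₀ + l))) := by
  rw [neg_add, zpow_add₀ hq]
  ring

section Rescaling

variable {K : ℕ → ℕ} {t : ℝ}

lemma tendsto_choose_div_pow {q : ℕ → ℝ} (hq : Tendsto q atTop atTop)
    (hK : Tendsto (fun M => (K M : ℝ) / q M) atTop (𝓝 t)) (n : ℕ) :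
    Tendsto (fun M => ((K M).choose n : ℝ) / q M ^ n) atTop (𝓝 (t ^ n / n !)) := by
  have hfactor (j : ℕ) : Tendsto (fun M => ((K M : ℝ) - j) / q M) atTop (𝓝 t) := by
    simpa only [sub_div, sub_zero] using hK.sub (tendsto_const_nhds.div_atTop hq)
  have hprod := tendsto_finsetProd (Finset.range n) fun j _ => hfactor j
  rw [Finset.prod_const, Finset.card_range] at hprod
  refine (hprod.div_const _).congr fun M => ?_
  rw [Nat.cast_choose_eq_descPochhammer_div, descPochhammer_eval_eq_prod_range,
    Finset.prod_div_distrib, Finset.prod_const, Finset.card_range, div_right_comm]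

lemma tendsto_one_sub_inv_pow (hK : Tendsto (fun M => (K M : ℝ) / M) atTop (𝓝 t)) :
    Tendsto (fun M : ℕ => (1 - 1 / (M : ℝ)) ^ K M) atTop (𝓝 (Real.exp (-t))) := by
  have hlog : Tendsto (fun M : ℕ => (M : ℝ) * Real.log (1 - 1 / M)) atTop (𝓝 (-1)) := by
    simpa [Function.comp_def, sub_eq_add_neg, neg_div] using
      (Real.tendsto_mul_log_one_add_div_atTop (-1)).comp tendsto_natCast_atTop_atTop
  have hexp := (Real.continuous_exp.tendsto _).comp (hK.mul hlog)
  rw [mul_neg_one] at hexp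
  refine hexp.congr' ?_
  filter_upwards [eventually_ge_atTop 2] with M hM
  have hM' : (2 : ℝ) ≤ M := by exact_mod_cast hM
  have hpos : 0 < 1 - 1 / (M : ℝ) := by
    rw [sub_pos, div_lt_one (by linarith)]; linarith
  have hcancel : (K M : ℝ) / M * (M * Real.log (1 - 1 / M)) = K M * Real.log (1 - 1 / M) := by
    field_simp
  rw [Function.comp_apply, hcancel, ← Real.log_pow, Real.exp_log (pow_pos hpos _)]

lemma tendsto_div_natCast_sub_one (hK : Tendsto (fun M => (K M : ℝ) / M) atTop (𝓝 t)) :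
    Tendsto (fun M : ℕ => (K M : ℝ) / (M - 1)) atTop (𝓝 t) := by
  have h := hK.mul (tendsto_natCast_div_add_atTop (-1 : ℝ))
  rw [mul_one] at h
  refine h.congr' ?_
  filter_upwards [eventually_ge_atTop 1] with M hM
  have hM0 : (M : ℝ) ≠ 0 := by positivity
  rw [← sub_eq_add_neg, div_mul_div_cancel₀ hM0]

lemma tendsto_floor_mul_toNat_div (ht : 0 ≤ t) :
    Tendsto (fun M : ℕ => (⌊(M : ℝ) * t⌋.toNat : ℝ) / M) atTop (𝓝 t) := by
  simpa only [Int.floor_toNat, Function.comp_def, mul_comm t] using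
    (tendsto_nat_floor_mul_div_atTop ht).comp tendsto_natCast_atTop_atTop

noncomputable def rescaledBinom (K : ℕ → ℕ) (M : ℕ) (m : ℤ) : ℝ :=
  binomExt (K M) m * ((M : ℝ) - 1) ^ (-m)

lemma tendsto_rescaledBinom (hK : Tendsto (fun M => (K M : ℝ) / M) atTop (𝓝 t)) (m : ℤ) :
    Tendsto (fun M => rescaledBinom K M m) atTop (𝓝 (poissonWeight t m)) := by
  rcases lt_or_ge m 0 with hm | hm
  · simp only [rescaledBinom, binomExt_of_neg _ hm, zero_mul, poissonWeight_of_neg _ hm,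
      tendsto_const_nhds]
  · lift m to ℕ using hm
    have hq : Tendsto (fun M : ℕ => (M : ℝ) - 1) atTop atTop :=
      tendsto_atTop_add_const_right _ _ tendsto_natCast_atTop_atTop
    simpa only [rescaledBinom, binomExt_natCast, poissonWeight_natCast, zpow_neg, zpow_natCast,
      div_eq_mul_inv] using tendsto_choose_div_pow hq (tendsto_div_natCast_sub_one hK) m

lemma eventually_norm_rescaledBinom_le (hK : Tendsto (fun M => (K M : ℝ) / M) atTop (𝓝 t)) :
    ∀ᶠ M in atTop, ∀ m, ‖rescaledBinom K M m‖ ≤ poissonWeight (t + 1) m := by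
  filter_upwards [eventually_ge_atTop 2,
    (tendsto_div_natCast_sub_one hK).eventually (gt_mem_nhds (lt_add_one t))] with M hM hlt m
  have hq := natCast_sub_one_pos hM
  rw [rescaledBinom, Real.norm_of_nonneg (mul_nonneg (binomExt_nonneg _ _) (zpow_nonneg hq.le _))]
  exact (binomExt_mul_zpow_neg_le _ hq m).trans
    (poissonWeight_le_poissonWeight (by positivity) hlt.le m)

lemma tendsto_rescaled_finsetSum (hK : Tendsto (fun M => (K M : ℝ) / M) atTop (𝓝 t)) (m₀ : ℤ)
    (n : ℕ) (c : ℕ → ℝ) :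
    Tendsto (fun M : ℕ => (1 - 1 / (M : ℝ)) ^ K M * ((M : ℝ) - 1) ^ (-m₀) *
      ∑ l ∈ Finset.range n, c l * binomExt (K M) (m₀ + l) * ((M : ℝ) - 1) ^ (-(l : ℤ)))
      atTop (𝓝 (Real.exp (-t) * ∑ l ∈ Finset.range n, c l * poissonWeight t (m₀ + l))) := by
  have hsum := tendsto_finsetSum (Finset.range n) fun l _ =>
    (tendsto_rescaledBinom hK (m₀ + l)).const_mul (c l)
  refine ((tendsto_one_sub_inv_pow hK).mul hsum).congr' ?_
  filter_upwards [eventually_ge_atTop 2] with M hM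
  simp only [rescaledBinom, mul_assoc _ (_ ^ (-m₀)), Finset.mul_sum,
    zpow_neg_mul_mul_mul_zpow_neg (natCast_sub_one_pos hM).ne']

lemma tendsto_rescaled_tsum (hK : Tendsto (fun M => (K M : ℝ) / M) atTop (𝓝 t)) (m₀ : ℤ)
    {c : ℕ → ℝ} {C : ℝ} (hc : ∀ l, ‖c l‖ ≤ C * 2 ^ l) :
    Tendsto (fun M : ℕ => (1 - 1 / (M : ℝ)) ^ K M * ((M : ℝ) - 1) ^ (-m₀) *
      ∑' l : ℕ, c l * binomExt (K M) (m₀ + l) * ((M : ℝ) - 1) ^ (-(l : ℤ)))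
      atTop (𝓝 (Real.exp (-t) * ∑' l : ℕ, c l * poissonWeight t (m₀ + l))) := by
  have htsum := tendsto_tsum_mul_of_norm_le_poissonWeight m₀ (tendsto_rescaledBinom hK)
    (eventually_norm_rescaledBinom_le hK) hc
  refine ((tendsto_one_sub_inv_pow hK).mul htsum).congr' ?_
  filter_upwards [eventually_ge_atTop 2] with M hM
  simp only [rescaledBinom, mul_assoc _ (_ ^ (-m₀)), ← tsum_mul_left,
    zpow_neg_mul_mul_mul_zpow_neg (natCast_sub_one_pos hM).ne']

end Rescaling

theorem stmt_15_general (N : ℕ) (t : ℝ) (ht : 0 < t) (x : Fin N → ℤ) :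
    Tendsto
      (fun M : ℕ =>
        Matrix.det (Matrix.of (fun i j : Fin N =>
          (1 - 1 / (M : ℝ)) ^ (⌊(M : ℝ) * t⌋.toNat) *
            ((M : ℝ) - 1) ^ (-(x i - ((i : ℕ) + 1 : ℤ))) *
            (if (j : ℕ) ≤ (i : ℕ) then
              ∑ l ∈ Finset.range ((i : ℕ) - (j : ℕ) + 1),
                (-1 : ℝ) ^ l * (((i : ℕ) - (j : ℕ)).choose l : ℝ) *
                  binomExt ⌊(M : ℝ) * t⌋.toNat (x i - ((i : ℕ) + 1 : ℤ) + l) *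
                  ((M : ℝ) - 1) ^ (-(l : ℤ))
            else
              ∑' l : ℕ,
                ((l + ((j : ℕ) - (i : ℕ)) - 1).choose (((j : ℕ) - (i : ℕ)) - 1) : ℝ) *
                  binomExt ⌊(M : ℝ) * t⌋.toNat (x i - ((i : ℕ) + 1 : ℤ) + l) *
                  ((M : ℝ) - 1) ^ (-(l : ℤ))))))
      atTop
      (𝓝 (Matrix.det (Matrix.of (fun i j : Fin N =>
        if (j : ℕ) ≤ (i : ℕ) then
          Real.exp (-t) *
            ∑ l ∈ Finset.range ((i : ℕ) - (j : ℕ) + 1),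
              (-1 : ℝ) ^ l * (((i : ℕ) - (j : ℕ)).choose l : ℝ) *
                poissonWeight t (x i - ((i : ℕ) + 1 : ℤ) + l)
        else
          Real.exp (-t) *
            ∑' l : ℕ,
              ((l + ((j : ℕ) - (i : ℕ)) - 1).choose (((j : ℕ) - (i : ℕ)) - 1) : ℝ) *
                poissonWeight t (x i - ((i : ℕ) + 1 : ℤ) + l))))) := by
  have hK := tendsto_floor_mul_toNat_div ht.le
  refine ((continuous_id.matrix_det).tendsto _).comp
    (tendsto_pi_nhds.2 fun i => tendsto_pi_nhds.2 fun j => ?_)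
  by_cases hji : (j : ℕ) ≤ i
  · simp only [Matrix.of_apply, if_pos hji]
    exact tendsto_rescaled_finsetSum hK _ _ _
  · simp only [Matrix.of_apply, if_neg hji]
    exact tendsto_rescaled_tsum hK _ (norm_choose_add_sub_one_le _)

/-- with `A_M` the rescaled discrete-time Bernoulli-TASEP transition matrix
(time step `1/M`, equal rates, initial positions `y_i = i`) and `G` the matrix of
Schütz kernel functions in summation form (rows/columns `1`-indexed via `i ↦ i+1` on
`Fin N`), `lim_{M→∞} det(A_M) = det(G)`. -/
theorem stmt_15 (N : ℕ) (hN : 1 ≤ N) (t : ℝ) (ht : 0 < t) (x : Fin N → ℤ) :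
    Tendsto
      (fun M : ℕ =>
        Matrix.det (Matrix.of (fun i j : Fin N =>
          (1 - 1 / (M : ℝ)) ^ (⌊(M : ℝ) * t⌋.toNat) *
            ((M : ℝ) - 1) ^ (-(x i - ((i : ℕ) + 1 : ℤ))) *
            (if (j : ℕ) ≤ (i : ℕ) then
              ∑ l ∈ Finset.range ((i : ℕ) - (j : ℕ) + 1),
                (-1 : ℝ) ^ l * (((i : ℕ) - (j : ℕ)).choose l : ℝ) *
                  binomExt ⌊(M : ℝ) * t⌋.toNat (x i - ((i : ℕ) + 1 : ℤ) + l) *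
                  ((M : ℝ) - 1) ^ (-(l : ℤ))
            else
              ∑' l : ℕ,
                ((l + ((j : ℕ) - (i : ℕ)) - 1).choose (((j : ℕ) - (i : ℕ)) - 1) : ℝ) *
                  binomExt ⌊(M : ℝ) * t⌋.toNat (x i - ((i : ℕ) + 1 : ℤ) + l) *
                  ((M : ℝ) - 1) ^ (-(l : ℤ))))))
      atTop
      (𝓝 (Matrix.det (Matrix.of (fun i j : Fin N =>
        if (j : ℕ) ≤ (i : ℕ) then
          Real.exp (-t) *
            ∑ l ∈ Finset.range ((i : ℕ) - (j : ℕ) + 1),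
              (-1 : ℝ) ^ l * (((i : ℕ) - (j : ℕ)).choose l : ℝ) *
                poissonWeight t (x i - ((i : ℕ) + 1 : ℤ) + l)
        else
          Real.exp (-t) *
            ∑' l : ℕ,
              ((l + ((j : ℕ) - (i : ℕ)) - 1).choose (((j : ℕ) - (i : ℕ)) - 1) : ℝ) *
                poissonWeight t (x i - ((i : ℕ) + 1 : ℤ) + l))))) :=
  stmt_15_general N t ht x
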